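/- arXiv:2307.00116 — 4 statements merged into one kernel-verified Lean document; each statement's English description precedes it below -/
import Mathlib

section
/- Let μ be a probability mass function on the edge set of a finite complete graph K. Then 2·∑_{e} μ(e)² + ∑_{{e,f} : |e∩f|=1} μ(e)μ(f) ≤ 2, with equality if and only if the support of μ is a single edge. -/
open Finset

/-- Let `μ` be a probability mass on the edges of a finite complete graph (i.e. on
the non-diagonal elements of `Sym2 V`). Then
`2·∑_e μ(e)² + ∑_{{e,f} : |e∩f|=1} μ(e)μ(f) ≤ 2`, with equality iff the support
of `μ` is a single edge. The sum over unordered pairs of edges sharing exactly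
one endpoint is written as half the corresponding sum over ordered pairs. -/
theorem edge_measure_P3_bound {V : Type*} [Fintype V] [DecidableEq V]
    (μ : Sym2 V → ℝ) (hnn : ∀ e, 0 ≤ μ e)
    (hdiag : ∀ e : Sym2 V, e.IsDiag → μ e = 0)
    (hsum : ∑ e : Sym2 V, μ e = 1) :
    (2 * ∑ e : Sym2 V, μ e ^ 2 +
        (1 / 2) * ∑ p ∈ (Finset.univ ×ˢ Finset.univ).filter
          (fun p : Sym2 V × Sym2 V =>
            ∃ x y z : V, x ≠ y ∧ x ≠ z ∧ y ≠ z ∧ p.1 = s(x, y) ∧ p.2 = s(x, z)),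
          μ p.1 * μ p.2) ≤ 2 ∧
    ((2 * ∑ e : Sym2 V, μ e ^ 2 +
        (1 / 2) * ∑ p ∈ (Finset.univ ×ˢ Finset.univ).filter
          (fun p : Sym2 V × Sym2 V =>
            ∃ x y z : V, x ≠ y ∧ x ≠ z ∧ y ≠ z ∧ p.1 = s(x, y) ∧ p.2 = s(x, z)),
          μ p.1 * μ p.2) = 2 ↔
      (Finset.univ.filter fun e : Sym2 V => μ e ≠ 0).card = 1) := by
  classical
  set P := (Finset.univ ×ˢ Finset.univ).filter
      (fun p : Sym2 V × Sym2 V =>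
        ∃ x y z : V, x ≠ y ∧ x ≠ z ∧ y ≠ z ∧ p.1 = s(x, y) ∧ p.2 = s(x, z)) with hPdef
  set S := ∑ e : Sym2 V, μ e ^ 2 with hSdef
  set T := ∑ p ∈ P, μ p.1 * μ p.2 with hTdef
  -- any pair in `P` consists of two distinct edges
  have hPne : ∀ p ∈ P, p.1 ≠ p.2 := by
    intro p hp
    rw [hPdef, mem_filter] at hp
    obtain ⟨-, x, y, z, hxy, hxz, hyz, h1, h2⟩ := hp
    rw [h1, h2]
    intro h
    exact hyz (Sym2.congr_right.mp h)
  have hμle : ∀ e, μ e ≤ 1 := by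
    intro e
    rw [← hsum]
    exact Finset.single_le_sum (fun i _ => hnn i) (mem_univ e)
  have hS_le_terms : ∀ e ∈ (univ : Finset (Sym2 V)), μ e ^ 2 ≤ μ e := by
    intro e _
    nlinarith [hnn e, hμle e]
  have hS_le_one : S ≤ 1 := by
    rw [hSdef, ← hsum]
    exact Finset.sum_le_sum hS_le_terms
  -- total sum over all ordered pairs is 1
  have htot : ∑ p ∈ (univ ×ˢ univ : Finset (Sym2 V × Sym2 V)), μ p.1 * μ p.2 = 1 := by
    have := Finset.sum_mul_sum (univ : Finset (Sym2 V)) (univ : Finset (Sym2 V)) μ μ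
    rw [hsum, mul_one] at this
    rw [Finset.sum_product]
    exact this.symm
  -- sum over the diagonal equals S
  have hdiagset : (univ ×ˢ univ : Finset (Sym2 V × Sym2 V)).filter
      (fun p => p.1 = p.2) = (univ : Finset (Sym2 V)).diag := by
    ext p
    simp [Finset.mem_diag]
  have hdiagsum : ∑ p ∈ (univ ×ˢ univ : Finset (Sym2 V × Sym2 V)).filter
      (fun p => p.1 = p.2), μ p.1 * μ p.2 = S := by
    rw [hdiagset, Finset.sum_diag]
    simp [hSdef, sq]
  -- split the total sum
  have hsplit := Finset.sum_filter_add_sum_filter_not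
      (univ ×ˢ univ : Finset (Sym2 V × Sym2 V)) (fun p => p.1 = p.2)
      (fun p => μ p.1 * μ p.2)
  rw [htot, hdiagsum] at hsplit
  have hTle : T ≤ ∑ p ∈ (univ ×ˢ univ : Finset (Sym2 V × Sym2 V)).filter
      (fun p => ¬ p.1 = p.2), μ p.1 * μ p.2 := by
    apply Finset.sum_le_sum_of_subset_of_nonneg
    · intro p hp
      exact mem_filter.mpr ⟨Finset.mem_of_mem_filter p hp, hPne p hp⟩
    · intro p _ _
      exact mul_nonneg (hnn _) (hnn _)
  have hST : S + T ≤ 1 := by linarith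
  have hT0 : 0 ≤ T := Finset.sum_nonneg fun p _ => mul_nonneg (hnn _) (hnn _)
  refine ⟨by linarith, ?_, ?_⟩
  · -- equality implies support is a single edge
    intro heq
    have hS1 : S = 1 := by linarith
    have hall : ∀ e ∈ (univ : Finset (Sym2 V)), μ e ^ 2 = μ e := by
      have h := (Finset.sum_eq_sum_iff_of_le hS_le_terms).mp (by rw [← hSdef, hS1, hsum])
      exact h
    have h01 : ∀ e, μ e = 0 ∨ μ e = 1 := by
      intro e
      have := hall e (mem_univ e)
      rcases mul_eq_zero.mp (by nlinarith : μ e * (μ e - 1) = 0) with h | h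
      · exact Or.inl h
      · exact Or.inr (by linarith)
    have hs1 : ∑ e ∈ univ.filter (fun e : Sym2 V => μ e ≠ 0), μ e = 1 := by
      rw [Finset.sum_filter_ne_zero]; exact hsum
    have hs2 : ∑ e ∈ univ.filter (fun e : Sym2 V => μ e ≠ 0), μ e =
        ((univ.filter (fun e : Sym2 V => μ e ≠ 0)).card : ℝ) := by
      rw [Finset.sum_congr rfl (fun e he => by
        rcases h01 e with h | h
        · exact absurd h (mem_filter.mp he).2
        · exact h)]
      simp
    have : ((univ.filter (fun e : Sym2 V => μ e ≠ 0)).card : ℝ) = 1 := by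
      rw [← hs2, hs1]
    exact_mod_cast this
  · -- support a single edge implies equality
    intro hcard
    obtain ⟨e₀, he₀⟩ := Finset.card_eq_one.mp hcard
    have hzero : ∀ e, e ≠ e₀ → μ e = 0 := by
      intro e he
      by_contra h
      have : e ∈ univ.filter (fun e : Sym2 V => μ e ≠ 0) :=
        mem_filter.mpr ⟨mem_univ _, h⟩
      rw [he₀, mem_singleton] at this
      exact he this
    have h1 : μ e₀ = 1 := by
      rw [← hsum, Finset.sum_eq_single e₀ (fun b _ hb => hzero b hb)
        (fun h => absurd (mem_univ e₀) h)]
    have hS1 : S = 1 := by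
      rw [hSdef, Finset.sum_eq_single e₀ (fun b _ hb => by rw [hzero b hb]; ring)
        (fun h => absurd (mem_univ e₀) h), h1]
      ring
    have hTz : T = 0 := by
      rw [hTdef]
      apply Finset.sum_eq_zero
      intro p hp
      have hne := hPne p hp
      by_cases hA : p.1 = e₀
      · by_cases hB : p.2 = e₀
        · exact absurd (hA.trans hB.symm) hne
        · rw [hzero p.2 hB, mul_zero]
      · rw [hzero p.1 hA, zero_mul]
    rw [hS1, hTz]
    ring
end

section
/- Fix a complete graph K, a vertex x ∈ V(K), an integer m ≥ 2, and an edge probability measure μ on K. Then the sum of μ(P) over all copies P of the path P_{m+1} (on m+1 vertices) in K with x as an endpoint satisfies: ∑ μ(P) ≤ μ̄(x)·((1−μ̄(x))/(m−1))^{m−1}, where μ(P) = ∏_{e ∈ E(P)} μ(e) and μ̄(x) = ∑_{y≠x} μ(xy). -/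
/-!
Deleting the first edge `xy` of a path rooted at `x` leaves a path rooted at `y` that avoids `x`,
so its weight is unchanged when every edge at `x` is deleted from `μ`; the remaining measure
`ν` has mass at most `1 - μ̄(x)`. By induction, the paths of length `n` rooted at `y` have
`ν`-weight at most `b ((T - b) / (n - 1)) ^ (n - 1)` with `b = ν̄(y) ≤ T = ν(K)`, and AM–GM
bounds this by `(T / n) ^ n ≤ ((1 - μ̄(x)) / n) ^ n`. Summing against `μ(xy)` gives the claim.
-/

open Finset

namespace RootedPaths

lemma mul_pow_le_add_div_pow {b c : ℝ} (hb : 0 ≤ b) (hc : 0 ≤ c) (n : ℕ) :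
    b * c ^ n ≤ ((b + n * c) / (n + 1)) ^ (n + 1) := by
  have hn : (0 : ℝ) < n + 1 := by positivity
  have amgm := Real.geom_mean_le_arith_mean2_weighted (w₁ := 1 / (n + 1)) (w₂ := n / (n + 1))
    (by positivity) (by positivity) hb hc (by field_simp; ring)
  calc b * c ^ n = (b ^ (1 / (n + 1) : ℝ) * c ^ ((n : ℝ) / (n + 1))) ^ (n + 1) := by
        rw [mul_pow, ← Real.rpow_mul_natCast hb, ← Real.rpow_mul_natCast hc]
        push_cast
        field_simp
        simp
    _ ≤ _ := pow_le_pow_left₀ (by positivity) (amgm.trans_eq (by field_simp)) _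

/-- At `n = 0` the left side is `b` because `(s - b) / 0 = 0` and `0 ^ 0 = 1`. -/
lemma mul_sub_div_pow_le {b s : ℝ} (hb : 0 ≤ b) (hbs : b ≤ s) (n : ℕ) :
    b * ((s - b) / n) ^ n ≤ (s / (n + 1)) ^ (n + 1) := by
  rcases n.eq_zero_or_pos with rfl | hn
  · simpa using hbs
  · have := mul_pow_le_add_div_pow hb (div_nonneg (sub_nonneg.2 hbs) n.cast_nonneg) n
    rwa [mul_div_cancel₀ _ (by positivity), add_sub_cancel] at this

variable {V : Type*}

def pathWeight (μ : Sym2 V → ℝ) {n : ℕ} (f : Fin (n + 1) → V) : ℝ :=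
  ∏ i : Fin n, μ s(f i.castSucc, f i.succ)

lemma pathWeight_nonneg {μ : Sym2 V → ℝ} (hμ : ∀ e, 0 ≤ μ e) {n : ℕ}
    (f : Fin (n + 1) → V) : 0 ≤ pathWeight μ f :=
  prod_nonneg fun _ _ => hμ _

lemma pathWeight_cons (μ : Sym2 V → ℝ) (x : V) {n : ℕ} (g : Fin (n + 1) → V) :
    pathWeight μ (Fin.cons x g : Fin (n + 2) → V) = μ s(x, g 0) * pathWeight μ g := by
  simp [pathWeight, Fin.prod_univ_succ]

variable [DecidableEq V]

def deleteEdgesAt (x : V) (μ : Sym2 V → ℝ) (e : Sym2 V) : ℝ :=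
  if x ∈ e then 0 else μ e

lemma deleteEdgesAt_nonneg {μ : Sym2 V → ℝ} (hμ : ∀ e, 0 ≤ μ e) (x : V) (e : Sym2 V) :
    0 ≤ deleteEdgesAt x μ e := by
  unfold deleteEdgesAt
  split_ifs <;> simp [hμ e]

lemma pathWeight_deleteEdgesAt (μ : Sym2 V → ℝ) {x : V} {n : ℕ} {g : Fin (n + 1) → V}
    (hx : x ∉ Set.range g) : pathWeight (deleteEdgesAt x μ) g = pathWeight μ g := by
  refine prod_congr rfl fun i _ => if_neg ?_
  simp only [Sym2.mem_iff, not_or]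
  exact ⟨fun h => hx ⟨_, h.symm⟩, fun h => hx ⟨_, h.symm⟩⟩

variable [Fintype V]

def weightedDegree (μ : Sym2 V → ℝ) (x : V) : ℝ :=
  ∑ y ∈ univ.erase x, μ s(x, y)

lemma weightedDegree_nonneg {μ : Sym2 V → ℝ} (hμ : ∀ e, 0 ≤ μ e) (x : V) :
    0 ≤ weightedDegree μ x :=
  sum_nonneg fun _ _ => hμ _

lemma weightedDegree_eq_sum_image (μ : Sym2 V → ℝ) (x : V) :
    weightedDegree μ x = ∑ e ∈ (univ.erase x).image (fun y => s(x, y)), μ e :=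
  (sum_image fun _ _ _ _ => Sym2.congr_right.1).symm

lemma weightedDegree_le_sum {μ : Sym2 V → ℝ} (hμ : ∀ e, 0 ≤ μ e) (x : V) :
    weightedDegree μ x ≤ ∑ e, μ e := by
  rw [weightedDegree_eq_sum_image]
  exact sum_le_univ_sum_of_nonneg hμ

lemma sum_deleteEdgesAt_add_weightedDegree_le {μ : Sym2 V → ℝ} (hμ : ∀ e, 0 ≤ μ e)
    (x : V) : ∑ e, deleteEdgesAt x μ e + weightedDegree μ x ≤ ∑ e, μ e := by
  have hdeg : weightedDegree μ x ≤ ∑ e ∈ univ.filter (x ∈ ·), μ e := by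
    rw [weightedDegree_eq_sum_image]
    refine sum_le_sum_of_subset_of_nonneg (fun e he => ?_) fun e _ _ => hμ e
    obtain ⟨y, -, rfl⟩ := mem_image.1 he
    simp
  have hdel : ∑ e, deleteEdgesAt x μ e = ∑ e ∈ univ.filter (x ∉ ·), μ e := by
    simp only [deleteEdgesAt, sum_filter, ite_not]
  rw [hdel, ← sum_filter_add_sum_filter_not univ (x ∈ ·) μ]
  linarith

/-- A copy of the path with `n` edges having `x` as an endpoint is counted once, as the injective
tuple `f` listing its vertices from `f 0 = x`. -/
def rootedPathSum (μ : Sym2 V → ℝ) (x : V) (n : ℕ) : ℝ :=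
  ∑ f ∈ univ.filter (fun f : Fin (n + 1) → V => Function.Injective f ∧ f 0 = x),
    pathWeight μ f

lemma rootedPathSum_zero (μ : Sym2 V → ℝ) (x : V) : rootedPathSum μ x 0 = 1 := by
  have : univ.filter (fun f : Fin 1 → V => Function.Injective f ∧ f 0 = x) = {fun _ => x} := by
    ext f
    simp only [mem_filter, mem_univ, true_and, mem_singleton]
    refine ⟨fun h => funext fun i => by rw [Subsingleton.elim i 0, h.2], ?_⟩
    rintro rfl
    exact ⟨Function.injective_of_subsingleton _, rfl⟩
  simp [rootedPathSum, this, pathWeight]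

lemma rootedPathSum_succ (μ : Sym2 V → ℝ) (x : V) (n : ℕ) :
    rootedPathSum μ x (n + 1) =
      ∑ g ∈ univ.filter
          (fun g : Fin (n + 1) → V => Function.Injective (Fin.cons x g : Fin (n + 2) → V)),
        μ s(x, g 0) * pathWeight (deleteEdgesAt x μ) g := by
  symm
  refine sum_nbij' (fun g => (Fin.cons x g : Fin (n + 2) → V)) Fin.tail (fun g hg => ?_)
    (fun f hf => ?_) (fun g _ => by simp) (fun f hf => ?_) (fun g hg => ?_)
  · simp_all
  · simp only [mem_filter, mem_univ, true_and] at hf ⊢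
    rw [← hf.2, Fin.cons_self_tail]
    exact hf.1
  · simp only [mem_filter, mem_univ, true_and] at hf
    rw [← hf.2, Fin.cons_self_tail]
  · simp only [mem_filter, mem_univ, true_and, Fin.cons_injective_iff] at hg
    rw [pathWeight_cons, pathWeight_deleteEdgesAt μ hg.1]

lemma rootedPathSum_succ_le_sum {μ : Sym2 V → ℝ} (hμ : ∀ e, 0 ≤ μ e) (x : V) (n : ℕ) :
    rootedPathSum μ x (n + 1) ≤
      ∑ y ∈ univ.erase x, μ s(x, y) * rootedPathSum (deleteEdgesAt x μ) y n := by
  set paths := univ.filter (fun g : Fin (n + 1) → V => Function.Injective g ∧ g 0 ≠ x)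
  have hsub : univ.filter (fun g : Fin (n + 1) → V =>
      Function.Injective (Fin.cons x g : Fin (n + 2) → V)) ⊆ paths := by
    intro g hg
    simp only [paths, mem_filter, mem_univ, true_and, Fin.cons_injective_iff] at hg ⊢
    exact ⟨hg.2, fun h => hg.1 ⟨0, h⟩⟩
  have hroot : ∀ g ∈ paths, g 0 ∈ univ.erase x := fun g hg => by simp_all [paths]
  calc rootedPathSum μ x (n + 1)
      ≤ ∑ g ∈ paths, μ s(x, g 0) * pathWeight (deleteEdgesAt x μ) g := by
        rw [rootedPathSum_succ]
        exact sum_le_sum_of_subset_of_nonneg hsub fun g _ _ =>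
          mul_nonneg (hμ _) (pathWeight_nonneg (deleteEdgesAt_nonneg hμ x) g)
    _ = _ := by
        rw [← sum_fiberwise_of_maps_to hroot]
        refine sum_congr rfl fun y hy => ?_
        rw [rootedPathSum, mul_sum, filter_filter]
        refine sum_congr ?_ fun g hg => by rw [(mem_filter.1 hg).2.2]
        ext g
        simp only [mem_filter, mem_univ, true_and]
        constructor
        · rintro ⟨⟨hinj, -⟩, rfl⟩
          exact ⟨hinj, rfl⟩
        · rintro ⟨hinj, rfl⟩
          exact ⟨⟨hinj, (mem_erase.1 hy).1⟩, rfl⟩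

theorem rootedPathSum_succ_le {μ : Sym2 V → ℝ} (hμ : ∀ e, 0 ≤ μ e) (x : V) (n : ℕ) :
    rootedPathSum μ x (n + 1) ≤
      weightedDegree μ x * ((∑ e, μ e - weightedDegree μ x) / n) ^ n := by
  induction n generalizing μ x with
  | zero => simpa [rootedPathSum_zero, weightedDegree] using rootedPathSum_succ_le_sum hμ x 0
  | succ n ih =>
    set ν := deleteEdgesAt x μ
    set T := ∑ e, μ e - weightedDegree μ x
    have hν : ∀ e, 0 ≤ ν e := deleteEdgesAt_nonneg hμ x
    have hν_le : ∀ y, rootedPathSum ν y (n + 1) ≤ (T / (n + 1 : ℕ)) ^ (n + 1) := fun y =>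
      calc rootedPathSum ν y (n + 1)
          ≤ weightedDegree ν y * ((∑ e, ν e - weightedDegree ν y) / n) ^ n := ih hν y
        _ ≤ ((∑ e, ν e) / (n + 1)) ^ (n + 1) :=
          mul_sub_div_pow_le (weightedDegree_nonneg hν y) (weightedDegree_le_sum hν y) n
        _ ≤ (T / (n + 1 : ℕ)) ^ (n + 1) := by
          have := sum_deleteEdgesAt_add_weightedDegree_le hμ x
          push_cast
          gcongr
          · exact div_nonneg (sum_nonneg fun e _ => hν e) (by positivity)
          · linarith
    calc rootedPathSum μ x (n + 1 + 1)
        ≤ ∑ y ∈ univ.erase x, μ s(x, y) * rootedPathSum ν y (n + 1) :=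
          rootedPathSum_succ_le_sum hμ x (n + 1)
      _ ≤ ∑ y ∈ univ.erase x, μ s(x, y) * (T / (n + 1 : ℕ)) ^ (n + 1) :=
          sum_le_sum fun y _ => mul_le_mul_of_nonneg_left (hν_le y) (hμ _)
      _ = weightedDegree μ x * (T / (n + 1 : ℕ)) ^ (n + 1) := (sum_mul _ _ _).symm

end RootedPaths

theorem rooted_path_bound_general {V : Type*} [Fintype V] [DecidableEq V]
    (m : ℕ) (hm : 2 ≤ m) (x : V)
    (μ : Sym2 V → ℝ) (hnn : ∀ e, 0 ≤ μ e)
    (hsum : ∑ e : Sym2 V, μ e = 1) :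
    ∑ f ∈ Finset.univ.filter (fun f : Fin (m + 1) → V => Function.Injective f ∧ f 0 = x),
        ∏ i : Fin m, μ s(f i.castSucc, f i.succ) ≤
      (∑ y ∈ Finset.univ.erase x, μ s(x, y)) *
        ((1 - ∑ y ∈ Finset.univ.erase x, μ s(x, y)) / ((m : ℝ) - 1)) ^ (m - 1) := by
  obtain ⟨n, rfl⟩ : ∃ n, m = n + 1 := ⟨m - 1, by omega⟩
  have h := RootedPaths.rootedPathSum_succ_le hnn x n
  rw [hsum] at h
  simpa [RootedPaths.rootedPathSum, RootedPaths.pathWeight, RootedPaths.weightedDegree] using h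

/-- Rooted path bound: for an edge probability measure `μ` on a complete graph
with at least `m + 1` vertices (`m ≥ 2`) and a vertex `x`, the total `μ`-weight
of copies of the path on `m + 1` vertices having `x` as an endpoint (each such
unlabeled copy corresponding to exactly one injective tuple starting at `x`) is
at most `μ̄(x)·((1 - μ̄(x))/(m-1))^(m-1)`. -/
theorem rooted_path_bound {V : Type*} [Fintype V] [DecidableEq V]
    (m : ℕ) (hm : 2 ≤ m) (hcard : m + 1 ≤ Fintype.card V) (x : V)
    (μ : Sym2 V → ℝ) (hnn : ∀ e, 0 ≤ μ e)
    (hdiag : ∀ e : Sym2 V, e.IsDiag → μ e = 0)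
    (hsum : ∑ e : Sym2 V, μ e = 1) :
    ∑ f ∈ Finset.univ.filter (fun f : Fin (m + 1) → V => Function.Injective f ∧ f 0 = x),
        ∏ i : Fin m, μ s(f i.castSucc, f i.succ) ≤
      (∑ y ∈ Finset.univ.erase x, μ s(x, y)) *
        ((1 - ∑ y ∈ Finset.univ.erase x, μ s(x, y)) / ((m : ℝ) - 1)) ^ (m - 1) :=
  rooted_path_bound_general m hm x μ hnn hsum
end

section
/- Let μ be a probability mass function on the edges of a complete graph K and x ∈ V(K) with μ̄(x) = ∑_{y≠x} μ(xy). Then ∑_{y≠x} μ(xy)·(μ̄(y) − μ(xy)) ≤ μ̄(x)·(1 − μ̄(x)). -/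
open Finset

private lemma bar_eq_edge_sum {V : Type*} [Fintype V] [DecidableEq V]
    (μ : Sym2 V → ℝ) (hdiag : ∀ e : Sym2 V, e.IsDiag → μ e = 0) (x : V) :
    ∑ z ∈ Finset.univ.erase x, μ s(x, z)
      = ∑ e ∈ Finset.univ.filter (fun e : Sym2 V => x ∈ e), μ e := by
  have himg : (Finset.univ.erase x).image (fun z => s(x, z))
      = Finset.univ.filter (fun e : Sym2 V => x ∈ e ∧ ¬ e.IsDiag) := by
    ext e
    simp only [mem_image, mem_erase, mem_filter, mem_univ, true_and]
    constructor
    · rintro ⟨z, hz, rfl⟩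
      refine ⟨Sym2.mem_mk_left x z, ?_⟩
      rw [Sym2.mk_isDiag_iff]
      exact fun h => hz.1 h.symm
    · rintro ⟨hx, hnd⟩
      induction e with
      | _ a b =>
        rw [Sym2.mem_iff] at hx
        rw [Sym2.mk_isDiag_iff] at hnd
        rcases hx with rfl | rfl
        · exact ⟨b, ⟨fun h => hnd h.symm, trivial⟩, rfl⟩
        · exact ⟨a, ⟨fun h => hnd h, trivial⟩, Sym2.eq_swap⟩
  rw [← Finset.sum_image (f := μ) (g := fun z => s(x, z))
      (by intro a _ b _ h; exact (Sym2.congr_right).1 h)]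
  rw [himg]
  apply Finset.sum_subset
  · intro e he
    simp only [mem_filter, mem_univ, true_and] at he ⊢
    exact he.1
  · intro e he hne
    simp only [mem_filter, mem_univ, true_and] at he hne
    exact hdiag e (by tauto)

private lemma bar_add_bar_le {V : Type*} [Fintype V] [DecidableEq V]
    (μ : Sym2 V → ℝ) (hnn : ∀ e, 0 ≤ μ e)
    (hdiag : ∀ e : Sym2 V, e.IsDiag → μ e = 0)
    (hsum : ∑ e : Sym2 V, μ e = 1)
    {x y : V} (hxy : x ≠ y) :
    (∑ z ∈ Finset.univ.erase x, μ s(x, z)) + (∑ z ∈ Finset.univ.erase y, μ s(y, z))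
      ≤ 1 + μ s(x, y) := by
  rw [bar_eq_edge_sum μ hdiag x, bar_eq_edge_sum μ hdiag y]
  set Ex := Finset.univ.filter (fun e : Sym2 V => x ∈ e)
  set Ey := Finset.univ.filter (fun e : Sym2 V => y ∈ e)
  have hinter : Ex ∩ Ey = {s(x, y)} := by
    ext e
    simp only [Ex, Ey, mem_inter, mem_filter, mem_univ, true_and, mem_singleton]
    constructor
    · rintro ⟨hx, hy⟩
      induction e with
      | _ a b =>
        rw [Sym2.mem_iff] at hx hy
        rw [Sym2.eq_iff]
        rcases hx with rfl | rfl <;> rcases hy with rfl | rfl <;> tauto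
    · rintro rfl
      exact ⟨Sym2.mem_mk_left x y, Sym2.mem_mk_right x y⟩
  have key := Finset.sum_union_inter (s₁ := Ex) (s₂ := Ey) (f := μ)
  rw [hinter, Finset.sum_singleton] at key
  have hle : ∑ e ∈ Ex ∪ Ey, μ e ≤ 1 := by
    rw [← hsum]
    exact Finset.sum_le_sum_of_subset_of_nonneg (Finset.subset_univ _)
      (fun e _ _ => hnn e)
  linarith

/-- For an edge probability measure `μ` on a complete graph and a vertex `x`:
`∑_{y ≠ x} μ(xy)·(μ̄(y) − μ(xy)) ≤ μ̄(x)·(1 − μ̄(x))`, where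
`μ̄(x) = ∑_{z ≠ x} μ(xz)`. -/
theorem edge_measure_cherry_bound {V : Type*} [Fintype V] [DecidableEq V]
    (μ : Sym2 V → ℝ) (hnn : ∀ e, 0 ≤ μ e)
    (hdiag : ∀ e : Sym2 V, e.IsDiag → μ e = 0)
    (hsum : ∑ e : Sym2 V, μ e = 1)
    (x : V) :
    ∑ y ∈ Finset.univ.erase x,
        μ s(x, y) * ((∑ z ∈ Finset.univ.erase y, μ s(y, z)) - μ s(x, y)) ≤
      (∑ z ∈ Finset.univ.erase x, μ s(x, z)) *
        (1 - ∑ z ∈ Finset.univ.erase x, μ s(x, z)) := by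
  have step : ∀ y ∈ Finset.univ.erase x,
      μ s(x, y) * ((∑ z ∈ Finset.univ.erase y, μ s(y, z)) - μ s(x, y))
        ≤ μ s(x, y) * (1 - ∑ z ∈ Finset.univ.erase x, μ s(x, z)) := by
    intro y hy
    have hxy : x ≠ y := fun h => (Finset.mem_erase.1 hy).1 h.symm
    have := bar_add_bar_le μ hnn hdiag hsum hxy
    have := hnn s(x, y)
    nlinarith
  calc ∑ y ∈ Finset.univ.erase x,
        μ s(x, y) * ((∑ z ∈ Finset.univ.erase y, μ s(y, z)) - μ s(x, y))
      ≤ ∑ y ∈ Finset.univ.erase x,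
        μ s(x, y) * (1 - ∑ z ∈ Finset.univ.erase x, μ s(x, z)) :=
        Finset.sum_le_sum step
    _ = _ := by rw [← Finset.sum_mul]
end

section
/- Let μ be an edge probability measure on a complete graph K and m ≥ 2 an integer. Suppose μ̄(x) ≥ s/m for every x in the support of μ̄, where s ≥ 0. Then β(μ; P_{m+1}) ≤ ((1 − s/m)/(m−1))^{m−1} ≤ e^{1−s}/m^{m−1}. -/
/-!
Split `pathSum` by the starting vertex `x` of the path. Deleting `x` leaves a weighted graph of
doubled mass `2 - 2 μ̄(x)`, and in a graph of doubled mass at most `2T` the paths with `k` edges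
starting at a given vertex weigh at most `(T / k) ^ k`: peel off the first edge and induct on `k`,
closing the step with the AM-GM bound `A ((T - A) / k) ^ k ≤ (T / (k + 1)) ^ (k + 1)`, where `A`
is the degree of the starting vertex. So the paths from `x` weigh at most
`μ̄(x) ((1 - μ̄(x)) / (m - 1)) ^ (m - 1) ≤ μ̄(x) ((1 - s / m) / (m - 1)) ^ (m - 1)`, and the
`μ̄(x)` sum to `2`. The exponential bound is `(1 + t / n) ^ n ≤ e ^ t` with `t = 1 - s`.
-/

open Finset

/-- Sum over ordered injective tuples of the `μ`-weight of the corresponding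
cycle on `m` vertices; each unlabeled copy of `C_m` (`m ≥ 3`) is counted `2m`
times, so `β(μ; C_m) = cycleSum m μ / (2m)`. -/
noncomputable def cycleSum (m : ℕ) {V : Type*} [Fintype V] [DecidableEq V]
    (μ : Sym2 V → ℝ) : ℝ :=
  ∑ f ∈ Finset.univ.filter (fun f : Fin m → V => Function.Injective f),
    ∏ i : Fin m, μ s(f i, f (finRotate m i))

/-- Sum over ordered injective tuples of the `μ`-weight of the corresponding
path on `m + 1` vertices; each unlabeled copy of `P_{m+1}` is counted twice, so
`β(μ; P_{m+1}) = pathSum m μ / 2`. -/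
noncomputable def pathSum (m : ℕ) {V : Type*} [Fintype V] [DecidableEq V]
    (μ : Sym2 V → ℝ) : ℝ :=
  ∑ f ∈ Finset.univ.filter (fun f : Fin (m + 1) → V => Function.Injective f),
    ∏ i : Fin m, μ s(f i.castSucc, f i.succ)

lemma mul_pow_le_add_div_pow (k : ℕ) {a b : ℝ} (ha : 0 ≤ a) (hb : 0 ≤ b) :
    a * b ^ k ≤ ((a + k * b) / (k + 1)) ^ (k + 1) := by
  rcases hb.eq_or_lt with rfl | hb
  · rcases k.eq_zero_or_pos with rfl | hk
    · simp
    · rw [zero_pow hk.ne', mul_zero]; positivity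
  -- Bernoulli's inequality for the ratio of the mean `c` to `b`.
  obtain ⟨c, hc, rfl⟩ : ∃ c, 0 ≤ c ∧ a = (k + 1) * c - k * b :=
    ⟨(a + k * b) / (k + 1), by positivity, by field_simp; ring⟩
  have hbern := one_add_mul_le_pow (a := c / b - 1) (by linarith [div_nonneg hc hb.le]) (k + 1)
  calc ((k + 1) * c - k * b) * b ^ k
        = b ^ (k + 1) * (1 + ((k + 1 : ℕ) : ℝ) * (c / b - 1)) := by
          field_simp; push_cast; ring
    _ ≤ b ^ (k + 1) * (1 + (c / b - 1)) ^ (k + 1) := by gcongr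
    _ = (((k + 1) * c - k * b + k * b) / (k + 1)) ^ (k + 1) := by
        rw [add_sub_cancel, div_pow, mul_div_cancel₀ _ (by positivity), sub_add_cancel,
          mul_div_cancel_left₀ _ (by positivity)]

lemma mul_sub_div_pow_le (k : ℕ) {a t : ℝ} (ha : 0 ≤ a) (hat : a ≤ t) :
    a * ((t - a) / k) ^ k ≤ (t / (k + 1)) ^ (k + 1) := by
  rcases k.eq_zero_or_pos with rfl | hk
  · simpa using hat
  have := mul_pow_le_add_div_pow k ha (div_nonneg (sub_nonneg.2 hat) (Nat.cast_nonneg k))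
  rwa [mul_div_cancel₀ _ (by positivity), add_sub_cancel] at this

lemma pow_div_sub_one_le_exp_div {m : ℕ} {s : ℝ} (hs : s ≤ m) :
    ((1 - s / m) / ((m : ℝ) - 1)) ^ (m - 1) ≤ Real.exp (1 - s) / (m : ℝ) ^ (m - 1) := by
  rcases m with _ | n
  · simp at hs ⊢
    linarith
  have hbase : ((1 - s / (n + 1)) / n) ^ n = (1 - (s - 1) / n) ^ n / ((n : ℝ) + 1) ^ n := by
    rcases n.eq_zero_or_pos with rfl | hn
    · simp
    rw [← div_pow]
    congr 1
    field_simp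
    ring
  push_cast at hs ⊢
  rw [add_sub_cancel_right, hbase, ← neg_sub s 1]
  gcongr
  exact Real.one_sub_div_pow_le_exp_neg (by linarith)

namespace PathWeight

section Walks

variable {V : Type*} (μ : Sym2 V → ℝ)

def walkWeight {k : ℕ} (f : Fin (k + 1) → V) : ℝ :=
  ∏ i : Fin k, μ s(f i.castSucc, f i.succ)

lemma walkWeight_cons {k : ℕ} (y : V) (g : Fin (k + 1) → V) :
    walkWeight μ (Fin.cons y g : Fin (k + 2) → V) = μ s(y, g 0) * walkWeight μ g := by
  simp [walkWeight, Fin.prod_univ_succ]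

end Walks

variable {V : Type*} [Fintype V] [DecidableEq V] (μ : Sym2 V → ℝ)

def avoidingPaths (k : ℕ) (X : Finset V) : Finset (Fin (k + 1) → V) :=
  univ.filter fun f => Function.Injective f ∧ ∀ i, f i ∉ X

def pathWeight (k : ℕ) (X : Finset V) (y : V) : ℝ :=
  ∑ f ∈ (avoidingPaths k X).filter (· 0 = y), walkWeight μ f

lemma sum_mul_pathWeight (φ : V → ℝ) (k : ℕ) (X : Finset V) :
    ∑ u ∈ Xᶜ, φ u * pathWeight μ k X u =
      ∑ f ∈ avoidingPaths k X, φ (f 0) * walkWeight μ f := by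
  have hmaps : ∀ f ∈ avoidingPaths k X, f 0 ∈ Xᶜ := fun f hf => by
    simp only [avoidingPaths, mem_filter] at hf
    exact mem_compl.2 (hf.2.2 0)
  rw [← sum_fiberwise_of_maps_to hmaps]
  refine sum_congr rfl fun u _ => ?_
  rw [pathWeight, mul_sum]
  exact sum_congr rfl fun f hf => by rw [(mem_filter.1 hf).2]

lemma pathSum_eq_sum_pathWeight (m : ℕ) : pathSum m μ = ∑ x, pathWeight μ m ∅ x := by
  simpa [avoidingPaths, pathSum, walkWeight] using (sum_mul_pathWeight μ 1 m ∅).symm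

lemma filter_avoidingPaths_succ {k : ℕ} {X : Finset V} {y : V} (hy : y ∉ X) :
    (avoidingPaths (k + 1) X).filter (· 0 = y) =
      (avoidingPaths k (insert y X)).map
        ⟨Fin.cons y, Fin.cons_right_injective (α := fun _ => V) y⟩ := by
  ext f
  obtain ⟨a, g, rfl⟩ : ∃ a g, f = Fin.cons a g :=
    ⟨f 0, Fin.tail f, (Fin.cons_self_tail f).symm⟩
  simp [avoidingPaths, Fin.cons_injective_iff, Fin.forall_fin_succ]
  grind

lemma pathWeight_zero {X : Finset V} {y : V} (hy : y ∉ X) : pathWeight μ 0 X y = 1 := by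
  have hpaths : (avoidingPaths 0 X).filter (· 0 = y) = {fun _ => y} := by
    ext f
    simp only [avoidingPaths, mem_filter, mem_univ, true_and, mem_singleton]
    constructor
    · rintro ⟨-, h⟩
      funext i
      rwa [Subsingleton.elim (α := Fin 1) i 0]
    · rintro rfl
      exact ⟨⟨fun a b _ => Subsingleton.elim (α := Fin 1) a b, fun _ => hy⟩, rfl⟩
  simp [pathWeight, hpaths, walkWeight]

lemma pathWeight_succ (k : ℕ) {X : Finset V} {y : V} (hy : y ∉ X) :
    pathWeight μ (k + 1) X y =
      ∑ u ∈ Xᶜ.erase y, μ s(y, u) * pathWeight μ k (insert y X) u := by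
  rw [← compl_insert, sum_mul_pathWeight, pathWeight, filter_avoidingPaths_succ hy, sum_map]
  exact sum_congr rfl fun g _ => walkWeight_cons μ y g

def degreeOutside (X : Finset V) (y : V) : ℝ :=
  ∑ u ∈ Xᶜ.erase y, μ s(y, u)

/-- Twice the `μ`-mass of the edges with both ends outside `X`. -/
def massOutside (X : Finset V) : ℝ :=
  ∑ u ∈ Xᶜ, degreeOutside μ X u

variable {μ}

lemma degreeOutside_nonneg (hμ : ∀ e, 0 ≤ μ e) (X : Finset V) (y : V) :
    0 ≤ degreeOutside μ X y :=
  sum_nonneg fun _ _ => hμ _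

lemma massOutside_nonneg (hμ : ∀ e, 0 ≤ μ e) (X : Finset V) : 0 ≤ massOutside μ X :=
  sum_nonneg fun _ _ => degreeOutside_nonneg hμ X _

lemma massOutside_insert {X : Finset V} {y : V} (hy : y ∉ X) :
    massOutside μ X = massOutside μ (insert y X) + 2 * degreeOutside μ X y := by
  have hyc : y ∈ Xᶜ := mem_compl.2 hy
  have hsplit : ∀ u ∈ Xᶜ.erase y,
      degreeOutside μ X u = μ s(y, u) + degreeOutside μ (insert y X) u := by
    intro u hu
    have hy' : y ∈ Xᶜ.erase u := mem_erase.2 ⟨(ne_of_mem_erase hu).symm, hyc⟩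
    rw [degreeOutside, ← add_sum_erase _ _ hy', Sym2.eq_swap, erase_right_comm, degreeOutside,
      compl_insert]
  rw [massOutside, ← add_sum_erase _ _ hyc, sum_congr rfl hsplit, sum_add_distrib,
    massOutside, compl_insert, two_mul, ← degreeOutside]
  ring

lemma massOutside_empty (hdiag : ∀ e : Sym2 V, e.IsDiag → μ e = 0) :
    massOutside μ ∅ = 2 * ∑ e, μ e := by
  have hpairs : massOutside μ ∅ = ∑ p : V × V, μ s(p.1, p.2) := by
    simp only [massOutside, degreeOutside, compl_empty, Fintype.sum_prod_type]
    exact sum_congr rfl fun u _ => sum_erase _ (hdiag _ (Sym2.mk_isDiag_iff.2 rfl))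
  rw [hpairs, ← sum_fiberwise univ (fun p : V × V => s(p.1, p.2)), mul_sum]
  refine sum_congr rfl fun e _ => ?_
  induction e using Sym2.ind with
  | _ a b =>
    by_cases hab : a = b
    · subst hab
      rw [hdiag _ (Sym2.mk_isDiag_iff.2 rfl), mul_zero]
      exact sum_eq_zero fun p hp => by
        rw [(mem_filter.1 hp).2, hdiag _ (Sym2.mk_isDiag_iff.2 rfl)]
    · have hfiber :
          univ.filter (fun p : V × V => s(p.1, p.2) = s(a, b)) = {(a, b), (b, a)} := by
        ext ⟨c, d⟩
        simp
      rw [hfiber, sum_pair (by simp [hab]), Sym2.eq_swap]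
      ring

lemma pathWeight_succ_le (hμ : ∀ e, 0 ≤ μ e) {k : ℕ} {X : Finset V} {y : V} {B : ℝ}
    (hy : y ∉ X) (hB : ∀ u ∉ insert y X, pathWeight μ k (insert y X) u ≤ B) :
    pathWeight μ (k + 1) X y ≤ degreeOutside μ X y * B := by
  rw [pathWeight_succ μ k hy, degreeOutside, sum_mul]
  refine sum_le_sum fun u hu => mul_le_mul_of_nonneg_left (hB u ?_) (hμ _)
  rwa [← compl_insert, mem_compl] at hu

lemma pathWeight_le (hμ : ∀ e, 0 ≤ μ e) (k : ℕ) {X : Finset V} {y : V} {T : ℝ}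
    (hy : y ∉ X) (hT : massOutside μ X ≤ 2 * T) : pathWeight μ k X y ≤ (T / k) ^ k := by
  induction k generalizing X y T with
  | zero => simp [pathWeight_zero μ hy]
  | succ k ih =>
    have hsplit := massOutside_insert (μ := μ) hy
    have hdeg := degreeOutside_nonneg hμ X y
    have hrest := massOutside_nonneg hμ (insert y X)
    calc pathWeight μ (k + 1) X y
        ≤ degreeOutside μ X y * ((T - degreeOutside μ X y) / k) ^ k :=
          pathWeight_succ_le hμ hy fun u hu => ih hu (by linarith)
      _ ≤ (T / (k + 1)) ^ (k + 1) := mul_sub_div_pow_le k hdeg (by linarith)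
      _ = (T / ((k + 1 : ℕ) : ℝ)) ^ (k + 1) := by push_cast; ring

section EdgeProbability

variable (hμ : ∀ e, 0 ≤ μ e) (hdiag : ∀ e : Sym2 V, e.IsDiag → μ e = 0)
  (hsum : ∑ e, μ e = 1)
include hdiag hsum

lemma sum_degreeOutside_empty : ∑ x, degreeOutside μ ∅ x = 2 := by
  simpa [massOutside, hsum] using massOutside_empty hdiag

lemma massOutside_singleton (x : V) : massOutside μ {x} = 2 - 2 * degreeOutside μ ∅ x := by
  have := massOutside_insert (μ := μ) (notMem_empty x)
  rw [massOutside_empty hdiag, hsum, LawfulSingleton.insert_empty_eq] at this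
  linarith

include hμ

lemma degreeOutside_empty_le_one (x : V) : degreeOutside μ ∅ x ≤ 1 := by
  linarith [massOutside_nonneg hμ {x}, massOutside_singleton hdiag hsum x]

lemma pathWeight_le_degree_mul {m : ℕ} (hm : 1 ≤ m) {x : V} {δ : ℝ}
    (hδ : δ ≤ degreeOutside μ ∅ x) :
    pathWeight μ m ∅ x ≤ degreeOutside μ ∅ x * ((1 - δ) / ((m : ℝ) - 1)) ^ (m - 1) := by
  obtain ⟨n, rfl⟩ := Nat.exists_eq_add_of_le' hm
  push_cast
  rw [add_sub_cancel_right]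
  refine pathWeight_succ_le hμ (notMem_empty x) fun u hu => pathWeight_le hμ n hu ?_
  rw [LawfulSingleton.insert_empty_eq, massOutside_singleton hdiag hsum]
  linarith

end EdgeProbability

end PathWeight

open PathWeight in
theorem path_beta_bound_of_min_degree_general {V : Type*} [Fintype V] [DecidableEq V]
    (m : ℕ) (hm : 2 ≤ m)
    (μ : Sym2 V → ℝ) (hnn : ∀ e, 0 ≤ μ e)
    (hdiag : ∀ e : Sym2 V, e.IsDiag → μ e = 0)
    (hsum : ∑ e : Sym2 V, μ e = 1)
    (s : ℝ)
    (hmin : ∀ x : V, (∑ y ∈ Finset.univ.erase x, μ s(x, y)) ≠ 0 →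
      s / m ≤ ∑ y ∈ Finset.univ.erase x, μ s(x, y)) :
    pathSum m μ / 2 ≤ ((1 - s / m) / ((m : ℝ) - 1)) ^ (m - 1) ∧
    ((1 - s / m) / ((m : ℝ) - 1)) ^ (m - 1) ≤ Real.exp (1 - s) / (m : ℝ) ^ (m - 1) := by
  have hm1 : 1 ≤ m := by omega
  set B := ((1 - s / m) / ((m : ℝ) - 1)) ^ (m - 1)
  have hmin' : ∀ x, degreeOutside μ ∅ x ≠ 0 → s / m ≤ degreeOutside μ ∅ x := by
    simpa [degreeOutside] using hmin
  have hvertex : ∀ x, pathWeight μ m ∅ x ≤ degreeOutside μ ∅ x * B := fun x => by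
    by_cases hx : degreeOutside μ ∅ x = 0
    · simpa [hx] using pathWeight_le_degree_mul hnn hdiag hsum hm1 hx.ge
    · exact pathWeight_le_degree_mul hnn hdiag hsum hm1 (hmin' x hx)
  have hsm : s ≤ m := by
    obtain ⟨x, -, hx⟩ := exists_ne_zero_of_sum_ne_zero
      ((sum_degreeOutside_empty hdiag hsum).trans_ne two_ne_zero)
    have := (hmin' x hx).trans (degreeOutside_empty_le_one hnn hdiag hsum x)
    rwa [div_le_one (by positivity)] at this
  refine ⟨?_, pow_div_sub_one_le_exp_div hsm⟩
  calc pathSum m μ / 2 = (∑ x, pathWeight μ m ∅ x) / 2 := by rw [pathSum_eq_sum_pathWeight]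
    _ ≤ (∑ x, degreeOutside μ ∅ x * B) / 2 := by gcongr with x; exact hvertex x
    _ = B := by rw [← sum_mul, sum_degreeOutside_empty hdiag hsum]; ring

/-- If every vertex in the support of `μ̄` has mass at least `s/m` (with `s ≥ 0`,
`m ≥ 2`), then `β(μ;P_{m+1}) ≤ ((1 − s/m)/(m−1))^(m−1) ≤ e^(1−s)/m^(m−1)`. -/
theorem path_beta_bound_of_min_degree {V : Type*} [Fintype V] [DecidableEq V]
    (m : ℕ) (hm : 2 ≤ m)
    (μ : Sym2 V → ℝ) (hnn : ∀ e, 0 ≤ μ e)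
    (hdiag : ∀ e : Sym2 V, e.IsDiag → μ e = 0)
    (hsum : ∑ e : Sym2 V, μ e = 1)
    (s : ℝ) (hs : 0 ≤ s)
    (hmin : ∀ x : V, (∑ y ∈ Finset.univ.erase x, μ s(x, y)) ≠ 0 →
      s / m ≤ ∑ y ∈ Finset.univ.erase x, μ s(x, y)) :
    pathSum m μ / 2 ≤ ((1 - s / m) / ((m : ℝ) - 1)) ^ (m - 1) ∧
    ((1 - s / m) / ((m : ℝ) - 1)) ^ (m - 1) ≤ Real.exp (1 - s) / (m : ℝ) ^ (m - 1) :=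
  path_beta_bound_of_min_degree_general m hm μ hnn hdiag hsum s hmin
end
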